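/- arXiv:2210.00895 — 6 statements merged into one kernel-verified Lean document; each statement's English description precedes it below -/
import Mathlib

section
/- Let ν and ν' be probability measures on ℝ with finite first moments and means μ = E(ν) > μ' = E(ν'). Let (X_i)_{i≥1} and (Y_i)_{i≥1} be mutually independent i.i.d. sequences with X_i distributed according to ν and Y_i according to ν', and let X̄_N and Ȳ_N denote the averages of the first N terms of each sequence. Then limsup_{N→∞} (1/N) · ln P(X̄_N ≤ Ȳ_N) ≤ − inf_{x ∈ [μ', μ]} (φ*_{ν'}(x) + φ*_ν(x)). -/
open MeasureTheory Filter Set ProbabilityTheory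
open scoped ENNReal NNReal

noncomputable section

/-- Mean of a (probability) measure on ℝ. -/
def Emean (ν : Measure ℝ) : ℝ := ∫ x, x ∂ν

open Classical in
/-- Kullback–Leibler divergence `∫ ln (dζ/dν) dζ`, equal to `+∞` if `ζ` is not absolutely
continuous with respect to `ν` (or the integral is not defined). -/
def KL (ζ ν : Measure ℝ) : ℝ≥0∞ :=
  if ζ ≪ ν ∧ Integrable (fun x => Real.log ((ζ.rnDeriv ν x).toReal)) ζ
  then ENNReal.ofReal (∫ x, Real.log ((ζ.rnDeriv ν x).toReal) ∂ζ)
  else ⊤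

/-- Log-moment generating function `φ_ν`, with values in `EReal` (so that `+∞` is allowed). -/
def logMgf (ν : Measure ℝ) (l : ℝ) : EReal :=
  ENNReal.log (∫⁻ x, ENNReal.ofReal (Real.exp (l * x)) ∂ν)

/-- Fenchel–Legendre transform `φ*_ν(x) = sup_λ (λ x − φ_ν(λ))`. -/
def phiStar (ν : Measure ℝ) (x : ℝ) : EReal :=
  ⨆ l : ℝ, ((l * x : ℝ) : EReal) - logMgf ν l

/-- `Φ(ν', ν) = inf_{x ∈ [E(ν'), E(ν)]} (φ*_{ν'}(x) + φ*_ν(x))`. -/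
def Phi (ν' ν : Measure ℝ) : EReal :=
  ⨅ x ∈ Set.Icc (Emean ν') (Emean ν), (phiStar ν' x + phiStar ν x)

/-- The model `P[0,1]` of all Borel probability measures on `[0,1]` (seen as measures on ℝ). -/
def Pcc : Set (Measure ℝ) :=
  {ζ | IsProbabilityMeasure ζ ∧ ζ (Set.Icc (0:ℝ) 1)ᶜ = 0}

/-- `Linf<(x, ν) = inf {KL(ζ, ν) : ζ ∈ D, E(ζ) < x}`, with `inf ∅ = +∞`. -/
def Linflt (D : Set (Measure ℝ)) (x : ℝ) (ν : Measure ℝ) : ℝ≥0∞ :=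
  ⨅ ζ ∈ {ζ ∈ D | Emean ζ < x}, KL ζ ν

/-- `Linf≤(x, ν) = inf {KL(ζ, ν) : ζ ∈ D, E(ζ) ≤ x}`, with `inf ∅ = +∞`. -/
def Linfle (D : Set (Measure ℝ)) (x : ℝ) (ν : Measure ℝ) : ℝ≥0∞ :=
  ⨅ ζ ∈ {ζ ∈ D | Emean ζ ≤ x}, KL ζ ν

/-- `Linf>(x, ν) = inf {KL(ζ, ν) : ζ ∈ D, E(ζ) > x}`, with `inf ∅ = +∞`. -/
def Linfgt (D : Set (Measure ℝ)) (x : ℝ) (ν : Measure ℝ) : ℝ≥0∞ :=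
  ⨅ ζ ∈ {ζ ∈ D | x < Emean ζ}, KL ζ ν

/-- `Linf≥(x, ν) = inf {KL(ζ, ν) : ζ ∈ D, E(ζ) ≥ x}`, with `inf ∅ = +∞`. -/
def Linfge (D : Set (Measure ℝ)) (x : ℝ) (ν : Measure ℝ) : ℝ≥0∞ :=
  ⨅ ζ ∈ {ζ ∈ D | x ≤ Emean ζ}, KL ζ ν

/-- Closed support of a measure on ℝ. -/
def msupport (ν : Measure ℝ) : Set ℝ := {x | ∀ U ∈ nhds x, ν U ≠ 0}

/-- Lower end `m(ν)` of the closed support of `ν`. -/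
def mMin (ν : Measure ℝ) : ℝ := sInf (msupport ν)

/-- Upper end `M(ν)` of the closed support of `ν`. -/
def mMax (ν : Measure ℝ) : ℝ := sSup (msupport ν)

/-!
Chernoff's bound for `∑ (Yᵢ - Xᵢ) ≥ 0` gives `limsup ≤ φ_{ν'}(λ) + φ_ν(-λ)` for every `λ ≥ 0`.
It remains to bound `inf_{λ ≥ 0} (φ_{ν'}(λ) + φ_ν(-λ))` by `-inf_{x ∈ [μ', μ]} (φ*_{ν'} + φ*_ν)(x)`,
a one-dimensional convex duality. Suppose `φ_{ν'}(c) + φ_ν(-c) ≥ -s` for all `c ≥ 0`; by Jensen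
(`φ_ν(λ) ≥ λ E(ν)`) this also holds for `c < 0`, since `μ' ≤ μ`. As `φ_{ν'}` and `φ_ν` are convex
(Hölder), every ratio `(s + φ_{ν'}(a) + φ_ν(b)) / (a + b)` with `a + b < 0` is at most every such
ratio with `a + b > 0`. A point `x` between them satisfies `(a + b) x ≤ s + φ_{ν'}(a) + φ_ν(b)` for
all `a, b`, that is `φ*_{ν'}(x) + φ*_ν(x) ≤ s`. Finally `φ*_ν` increases away from `E(ν)`, so `x`
may be clamped into `[μ', μ]`.
-/

open Real

section LogMgf

variable {ν : Measure ℝ}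

lemma measurable_ofReal_exp_mul (a : ℝ) :
    Measurable fun x : ℝ => ENNReal.ofReal (exp (a * x)) :=
  (measurable_const_mul a).exp.ennreal_ofReal

lemma logMgf_ne_bot [NeZero ν] (a : ℝ) : logMgf ν a ≠ ⊥ := by
  rw [logMgf, ne_eq, ENNReal.log_eq_bot_iff, lintegral_eq_zero_iff (measurable_ofReal_exp_mul a)]
  intro h
  have : ∀ᵐ x ∂ν, False :=
    h.mono fun x hx => (exp_pos (a * x)).not_ge (ENNReal.ofReal_eq_zero.1 hx)
  exact NeZero.ne ν (ae_eq_bot.1 (eventually_false_iff_eq_bot.1 this))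

lemma coe_toReal_logMgf [NeZero ν] {a : ℝ} (h : logMgf ν a ≠ ⊤) :
    ((logMgf ν a).toReal : EReal) = logMgf ν a :=
  EReal.coe_toReal h (logMgf_ne_bot a)

lemma logMgf_zero [IsProbabilityMeasure ν] : logMgf ν 0 = 0 := by
  simp [logMgf]

lemma integrable_exp_mul_of_logMgf_ne_top {a : ℝ} (h : logMgf ν a ≠ ⊤) :
    Integrable (fun x => exp (a * x)) ν := by
  rw [logMgf, ne_eq, ENNReal.log_eq_top_iff] at h
  refine ⟨(measurable_const_mul a).exp.aestronglyMeasurable, ?_⟩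
  rw [hasFiniteIntegral_iff_ofReal (ae_of_all _ fun x => (exp_pos _).le)]
  exact lt_top_iff_ne_top.2 h

lemma logMgf_eq_log_mgf [NeZero ν] {a : ℝ} (h : logMgf ν a ≠ ⊤) :
    logMgf ν a = (log (mgf id ν a) : EReal) := by
  have hint := integrable_exp_mul_of_logMgf_ne_top h
  rw [logMgf, ← ofReal_integral_eq_lintegral_ofReal hint (ae_of_all _ fun x => (exp_pos _).le),
    ENNReal.log_ofReal_of_pos (integral_exp_pos hint)]
  rfl

lemma mul_Emean_le_logMgf [IsProbabilityMeasure ν] (hint : Integrable (fun x => x) ν) (a : ℝ) :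
    ((a * Emean ν : ℝ) : EReal) ≤ logMgf ν a := by
  by_cases htop : logMgf ν a = ⊤
  · simp [htop]
  have hexp := integrable_exp_mul_of_logMgf_ne_top htop
  have jensen : exp (∫ x, a * x ∂ν) ≤ ∫ x, exp (a * x) ∂ν :=
    convexOn_exp.map_integral_le continuous_exp.continuousOn isClosed_univ
      (ae_of_all _ fun _ => mem_univ _) (hint.const_mul a) hexp
  rw [integral_const_mul] at jensen
  rw [logMgf_eq_log_mgf htop, EReal.coe_le_coe_iff, ← log_exp (a * Emean ν)]
  exact log_le_log (exp_pos _) jensen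

lemma mul_Emean_le_toReal_logMgf [IsProbabilityMeasure ν]
    (hint : Integrable (fun x => x) ν) {a : ℝ} (h : logMgf ν a ≠ ⊤) :
    a * Emean ν ≤ (logMgf ν a).toReal := by
  rw [← EReal.coe_le_coe_iff, coe_toReal_logMgf h]
  exact mul_Emean_le_logMgf hint a

lemma lintegral_exp_convex_comb_le {s t : ℝ} (hs : 0 ≤ s) (ht : 0 ≤ t) (hst : s + t = 1)
    (a b : ℝ) :
    ∫⁻ x, ENNReal.ofReal (exp ((s * a + t * b) * x)) ∂ν ≤
      (∫⁻ x, ENNReal.ofReal (exp (a * x)) ∂ν) ^ s *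
        (∫⁻ x, ENNReal.ofReal (exp (b * x)) ∂ν) ^ t := by
  refine le_of_eq_of_le (lintegral_congr fun x => ?_) (ENNReal.lintegral_mul_norm_pow_le
    (measurable_ofReal_exp_mul a).aemeasurable (measurable_ofReal_exp_mul b).aemeasurable hs ht hst)
  rw [ENNReal.ofReal_rpow_of_pos (exp_pos _), ENNReal.ofReal_rpow_of_pos (exp_pos _),
    ← ENNReal.ofReal_mul (rpow_nonneg (exp_pos _).le _), ← exp_mul, ← exp_mul, ← exp_add]
  ring_nf

lemma logMgf_convex_comb_le {s t : ℝ} (hs : 0 ≤ s) (ht : 0 ≤ t) (hst : s + t = 1) (a b : ℝ) :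
    logMgf ν (s * a + t * b) ≤ (s : EReal) * logMgf ν a + (t : EReal) * logMgf ν b := by
  rw [logMgf, logMgf, logMgf, ← ENNReal.log_rpow, ← ENNReal.log_rpow, ← ENNReal.log_mul_add]
  exact ENNReal.log_monotone (lintegral_exp_convex_comb_le hs ht hst a b)

lemma convexOn_toReal_logMgf [NeZero ν] :
    ConvexOn ℝ {a | logMgf ν a ≠ ⊤} fun a => (logMgf ν a).toReal := by
  have key : ∀ ⦃a⦄, logMgf ν a ≠ ⊤ → ∀ ⦃b⦄, logMgf ν b ≠ ⊤ → ∀ ⦃s t : ℝ⦄, 0 ≤ s → 0 ≤ t →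
      s + t = 1 → logMgf ν (s * a + t * b) ≤
        ((s * (logMgf ν a).toReal + t * (logMgf ν b).toReal : ℝ) : EReal) := by
    intro a ha b hb s t hs ht hst
    rw [EReal.coe_add, EReal.coe_mul, EReal.coe_mul, coe_toReal_logMgf ha, coe_toReal_logMgf hb]
    exact logMgf_convex_comb_le hs ht hst a b
  refine ⟨fun a ha b hb s t hs ht hst =>
    ne_top_of_le_ne_top (EReal.coe_ne_top _) (key ha hb hs ht hst),
    fun a ha b hb s t hs ht hst => ?_⟩
  have h := key ha hb hs ht hst
  simp only [smul_eq_mul]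
  rw [← EReal.coe_le_coe_iff, coe_toReal_logMgf (ne_top_of_le_ne_top (EReal.coe_ne_top _) h)]
  exact h

end LogMgf

section FenchelLegendre

variable {ν ν' : Measure ℝ}

lemma phiStar_nonneg [IsProbabilityMeasure ν] (x : ℝ) : 0 ≤ phiStar ν x :=
  le_iSup_of_le 0 (by simp [logMgf_zero])

lemma phiStar_le_of_mem_uIcc [IsProbabilityMeasure ν] (hint : Integrable (fun x => x) ν)
    {x y : ℝ} (h : x ∈ uIcc (Emean ν) y) : phiStar ν x ≤ phiStar ν y := by
  refine iSup_le fun l => ?_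
  have hl : l * x ≤ l * y ∨ l * x ≤ l * Emean ν := by
    rw [mem_uIcc] at h
    rcases h with ⟨h₁, h₂⟩ | ⟨h₁, h₂⟩ <;> rcases le_total 0 l with hl | hl <;>
      first | exact Or.inl (by nlinarith) | exact Or.inr (by nlinarith)
  rcases hl with hl | hl
  · exact (EReal.sub_le_sub (EReal.coe_le_coe hl) le_rfl).trans (le_iSup_of_le l le_rfl)
  · exact (EReal.sub_nonpos.2 ((EReal.coe_le_coe hl).trans (mul_Emean_le_logMgf hint l))).trans
      (phiStar_nonneg y)

lemma EReal.iSup_add_iSup_le {ι κ : Sort*} {f : ι → EReal} {g : κ → EReal} {c : EReal}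
    (h : ∀ i j, f i + g j ≤ c) : (⨆ i, f i) + (⨆ j, g j) ≤ c :=
  EReal.add_le_of_forall_lt fun _ hf _ hg => by
    obtain ⟨i, hi⟩ := lt_iSup_iff.1 hf
    obtain ⟨j, hj⟩ := lt_iSup_iff.1 hg
    exact (add_le_add hi.le hj.le).trans (h i j)

lemma phiStar_add_phiStar_le [NeZero ν] [NeZero ν'] {x s : ℝ}
    (h : ∀ a b, logMgf ν' a ≠ ⊤ → logMgf ν b ≠ ⊤ →
      (a + b) * x ≤ s + (logMgf ν' a).toReal + (logMgf ν b).toReal) :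
    phiStar ν' x + phiStar ν x ≤ s :=
  EReal.iSup_add_iSup_le fun a b => by
    by_cases ha : logMgf ν' a = ⊤
    · simp [ha]
    by_cases hb : logMgf ν b = ⊤
    · simp [hb]
    rw [← coe_toReal_logMgf ha, ← coe_toReal_logMgf hb]
    exact_mod_cast (by linarith [h a b ha hb] :
      a * x - (logMgf ν' a).toReal + (b * x - (logMgf ν b).toReal) ≤ s)

end FenchelLegendre

section Separation

variable {D₁ D₂ : Set ℝ} {F G : ℝ → ℝ}

lemma div_le_div_of_convexOn (hF : ConvexOn ℝ D₁ F) (hG : ConvexOn ℝ D₂ G)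
    (hdiag : ∀ c ∈ D₁, -c ∈ D₂ → 0 ≤ F c + G (-c)) {a a' b b' : ℝ}
    (ha : a ∈ D₁) (ha' : a' ∈ D₁) (hb : b ∈ D₂) (hb' : b' ∈ D₂)
    (hneg : a + b < 0) (hpos : 0 < a' + b') :
    (F a + G b) / (a + b) ≤ (F a' + G b') / (a' + b') := by
  have hS : 0 < (a' + b') - (a + b) := by linarith
  set t := (a' + b') / ((a' + b') - (a + b))
  set u := -(a + b) / ((a' + b') - (a + b))
  have htS : t * ((a' + b') - (a + b)) = a' + b' := div_mul_cancel₀ _ hS.ne'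
  have huS : u * ((a' + b') - (a + b)) = -(a + b) := div_mul_cancel₀ _ hS.ne'
  have ht : 0 ≤ t := div_nonneg hpos.le hS.le
  have hu : 0 ≤ u := div_nonneg (by linarith) hS.le
  have htu : t + u = 1 :=
    mul_right_cancel₀ hS.ne' (by linear_combination htS + huS)
  -- the weights put the combination of `(a, b)` and `(a', b')` on the line `a + b = 0`
  have hc : -(t * a + u * a') = t * b + u * b' := by
    have : (t * (a + b) + u * (a' + b')) * ((a' + b') - (a + b)) = 0 * ((a' + b') - (a + b)) := by
      linear_combination (a + b) * htS + (a' + b') * huS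
    linarith [mul_right_cancel₀ hS.ne' this]
  have hF' := hF.2 ha ha' ht hu htu
  have hG' := hG.2 hb hb' ht hu htu
  have hd := hdiag _ (hF.1 ha ha' ht hu htu) (hc ▸ hG.1 hb hb' ht hu htu)
  simp only [smul_eq_mul] at hF' hG' hd
  rw [hc] at hd
  have hprod : 0 ≤ (t * (F a + G b) + u * (F a' + G b')) * ((a' + b') - (a + b)) :=
    mul_nonneg (by linarith) hS.le
  rw [div_le_iff_of_neg hneg, div_mul_eq_mul_div, div_le_iff₀ hpos]
  linear_combination hprod + (F a + G b) * htS + (F a' + G b') * huS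

lemma exists_mul_le_of_convexOn {m₁ m₂ : ℝ} (hm : m₁ ≤ m₂)
    (hF : ConvexOn ℝ D₁ F) (hG : ConvexOn ℝ D₂ G) (h₁ : 0 ∈ D₁) (h₂ : 0 ∈ D₂)
    (hF₁ : ∀ a ∈ D₁, a * m₁ ≤ F a) (hG₂ : ∀ b ∈ D₂, b * m₂ ≤ G b)
    (hdiag : ∀ c ∈ D₁, -c ∈ D₂ → 0 ≤ c → 0 ≤ F c + G (-c)) :
    ∃ x, ∀ a ∈ D₁, ∀ b ∈ D₂, (a + b) * x ≤ F a + G b := by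
  have hdiag' : ∀ c ∈ D₁, -c ∈ D₂ → 0 ≤ F c + G (-c) := fun c hc hc' =>
    (le_total 0 c).elim (hdiag c hc hc') fun hc0 => by nlinarith [hF₁ c hc, hG₂ (-c) hc']
  by_cases hU : ∃ a ∈ D₁, ∃ b ∈ D₂, 0 < a + b
  swap
  · push Not at hU
    exact ⟨m₂, fun a ha b hb => by nlinarith [hU a ha 0 h₂, hF₁ a ha, hG₂ b hb]⟩
  by_cases hL : ∃ a ∈ D₁, ∃ b ∈ D₂, a + b < 0
  swap
  · push Not at hL
    exact ⟨m₁, fun a ha b hb => by nlinarith [hL 0 h₁ b hb, hF₁ a ha, hG₂ b hb]⟩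
  obtain ⟨a', ha', b', hb', hpos'⟩ := hU
  obtain ⟨a₀, ha₀, b₀, hb₀, hneg₀⟩ := hL
  set L := {r | ∃ a ∈ D₁, ∃ b ∈ D₂, a + b < 0 ∧ r = (F a + G b) / (a + b)}
  have hLU : ∀ r ∈ L, ∀ a' ∈ D₁, ∀ b' ∈ D₂, 0 < a' + b' → r ≤ (F a' + G b') / (a' + b') := by
    rintro _ ⟨a, ha, b, hb, hneg, rfl⟩ a' ha' b' hb' hpos
    exact div_le_div_of_convexOn hF hG hdiag' ha ha' hb hb' hneg hpos
  have hLbdd : BddAbove L := ⟨_, fun r hr => hLU r hr a' ha' b' hb' hpos'⟩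
  refine ⟨sSup L, fun a ha b hb => ?_⟩
  rcases lt_trichotomy (a + b) 0 with hneg | hzero | hpos
  · rw [mul_comm, ← div_le_iff_of_neg hneg]
    exact le_csSup hLbdd ⟨a, ha, b, hb, hneg, rfl⟩
  · obtain rfl : b = -a := by linarith
    rw [hzero, zero_mul]
    exact hdiag' a ha hb
  · rw [mul_comm, ← le_div_iff₀ hpos]
    exact csSup_le ⟨_, a₀, ha₀, b₀, hb₀, hneg₀, rfl⟩ fun r hr => hLU r hr a ha b hb hpos

end Separation

section Duality

variable {ν ν' : Measure ℝ} [IsProbabilityMeasure ν] [IsProbabilityMeasure ν']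

lemma exists_phiStar_add_phiStar_le (hint : Integrable (fun x => x) ν)
    (hint' : Integrable (fun x => x) ν') (hmean : Emean ν' ≤ Emean ν) {s : ℝ}
    (hs : ∀ l, 0 ≤ l → ((-s : ℝ) : EReal) ≤ logMgf ν' l + logMgf ν (-l)) :
    ∃ x, phiStar ν' x + phiStar ν x ≤ s := by
  have hs₀ : 0 ≤ s := by
    have := hs 0 le_rfl
    rw [neg_zero, logMgf_zero, logMgf_zero, add_zero, EReal.coe_nonpos] at this
    linarith
  obtain ⟨x, hx⟩ := exists_mul_le_of_convexOn (F := fun a => (logMgf ν' a).toReal + s) hmean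
    ((convexOn_toReal_logMgf (ν := ν')).add_const s) convexOn_toReal_logMgf
    (by simp [logMgf_zero]) (by simp [logMgf_zero])
    (fun a ha => by linarith [mul_Emean_le_toReal_logMgf hint' ha])
    (fun b hb => mul_Emean_le_toReal_logMgf hint hb)
    (fun c hc hc' hc₀ => by
      have := hs c hc₀
      rw [← coe_toReal_logMgf hc, ← coe_toReal_logMgf hc', ← EReal.coe_add,
        EReal.coe_le_coe_iff] at this
      linarith)
  exact ⟨x, phiStar_add_phiStar_le fun a b ha hb => (hx a ha b hb).trans_eq (by ring)⟩

lemma max_min_mem_uIcc {a b : ℝ} (hab : a ≤ b) (x : ℝ) :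
    max a (min b x) ∈ uIcc a x ∧ max a (min b x) ∈ uIcc b x := by
  rcases le_total x a with hxa | hax
  · rw [min_eq_right (hxa.trans hab), max_eq_left hxa]
    exact ⟨left_mem_uIcc, mem_uIcc.2 (Or.inr ⟨hxa, hab⟩)⟩
  rcases le_total x b with hxb | hbx
  · rw [min_eq_right hxb, max_eq_right hax]
    exact ⟨right_mem_uIcc, right_mem_uIcc⟩
  · rw [min_eq_left hbx, max_eq_right hab]
    exact ⟨mem_uIcc.2 (Or.inl ⟨hab, hbx⟩), left_mem_uIcc⟩

lemma exists_mem_Icc_phiStar_add_phiStar_le (hint : Integrable (fun x => x) ν)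
    (hint' : Integrable (fun x => x) ν') (hmean : Emean ν' ≤ Emean ν) {s : ℝ}
    (hs : ∀ l, 0 ≤ l → ((-s : ℝ) : EReal) ≤ logMgf ν' l + logMgf ν (-l)) :
    ∃ x ∈ Icc (Emean ν') (Emean ν), phiStar ν' x + phiStar ν x ≤ s := by
  obtain ⟨x, hx⟩ := exists_phiStar_add_phiStar_le hint hint' hmean hs
  obtain ⟨h', h⟩ := max_min_mem_uIcc hmean x
  exact ⟨_, ⟨le_max_left _ _, max_le hmean (min_le_left _ _)⟩,
    (add_le_add (phiStar_le_of_mem_uIcc hint' h') (phiStar_le_of_mem_uIcc hint h)).trans hx⟩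

lemma iInf_logMgf_add_le_neg_Phi (hint : Integrable (fun x => x) ν)
    (hint' : Integrable (fun x => x) ν') (hmean : Emean ν' ≤ Emean ν) :
    ⨅ l ∈ Ici (0 : ℝ), (logMgf ν' l + logMgf ν (-l)) ≤ -Phi ν' ν := by
  refine EReal.le_neg_of_le_neg (EReal.le_of_forall_lt_iff_le.1 fun s hs => ?_)
  obtain ⟨x, hx, hxs⟩ := exists_mem_Icc_phiStar_add_phiStar_le hint hint' hmean fun l hl => by
    rw [EReal.coe_neg]
    exact (EReal.neg_lt_comm.1 hs).le.trans (iInf₂_le l hl)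
  exact (iInf₂_le x hx).trans hxs

end Duality

section Chernoff

variable {Ω : Type*} [MeasurableSpace Ω] {P : Measure Ω} [IsProbabilityMeasure P]
  {ν ν' : Measure ℝ} {X Y : ℕ → Ω → ℝ}

lemma measureReal_sum_le_sum_le_mgf_pow (hXm : ∀ i, Measurable (X i))
    (hYm : ∀ i, Measurable (Y i)) (hindep : iIndepFun (Sum.elim X Y) P)
    (hX : ∀ i, P.map (X i) = ν) (hY : ∀ i, P.map (Y i) = ν') {l : ℝ} (hl : 0 ≤ l)
    (hν : Integrable (fun x => exp (-l * x)) ν) (hν' : Integrable (fun x => exp (l * x)) ν')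
    (N : ℕ) :
    P.real {ω | ∑ i ∈ Finset.range N, X i ω ≤ ∑ i ∈ Finset.range N, Y i ω} ≤
      (mgf id ν' l * mgf id ν (-l)) ^ N := by
  set Z : ℕ ⊕ ℕ → Ω → ℝ := Sum.elim (fun i => -X i) Y
  have hZm : ∀ j, Measurable (Z j) := fun j => j.rec (fun i => (hXm i).neg) hYm
  have hZ : iIndepFun Z P := by
    convert hindep.comp (Sum.elim (fun _ => Neg.neg) fun _ => id)
      (fun j => j.rec (fun _ => measurable_neg) fun _ => measurable_id) with j
    cases j <;> rfl
  have hZint : ∀ j, Integrable (fun ω => exp (l * Z j ω)) P := by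
    rintro (i | i)
    · have := ((hX i).symm ▸ hν).comp_measurable (hXm i)
      simpa [Z, Function.comp_def, neg_mul] using this
    · exact ((hY i).symm ▸ hν').comp_measurable (hYm i)
  have hZmgf : ∀ j, mgf (Z j) P l = Sum.elim (fun _ => mgf id ν (-l)) (fun _ => mgf id ν' l) j := by
    rintro (i | i)
    · simp [Z, mgf_neg, ← mgf_id_map (hXm i).aemeasurable, hX i]
    · simp [Z, ← mgf_id_map (hYm i).aemeasurable, hY i]
  set s := (Finset.range N).disjSum (Finset.range N)
  have hset : {ω | ∑ i ∈ Finset.range N, X i ω ≤ ∑ i ∈ Finset.range N, Y i ω} =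
      {ω | 0 ≤ (∑ j ∈ s, Z j) ω} := by
    ext ω
    simp [s, Z, Finset.sum_apply, Finset.sum_disjSum, ← sub_eq_neg_add]
  calc P.real {ω | ∑ i ∈ Finset.range N, X i ω ≤ ∑ i ∈ Finset.range N, Y i ω}
      ≤ exp (-l * 0) * mgf (∑ j ∈ s, Z j) P l := hset ▸
        measure_ge_le_exp_mul_mgf 0 hl (hZ.integrable_exp_mul_sum hZm fun j _ => hZint j)
    _ = (mgf id ν' l * mgf id ν (-l)) ^ N := by
        rw [hZ.mgf_sum hZm, Finset.prod_disjSum, Finset.prod_congr rfl fun j _ => hZmgf _,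
          Finset.prod_congr rfl fun j _ => hZmgf _]
        simp [mul_pow, mul_comm]

lemma inv_mul_log_measure_avg_le_avg_le [IsProbabilityMeasure ν] [IsProbabilityMeasure ν']
    (hXm : ∀ i, Measurable (X i)) (hYm : ∀ i, Measurable (Y i))
    (hindep : iIndepFun (Sum.elim X Y) P) (hX : ∀ i, P.map (X i) = ν) (hY : ∀ i, P.map (Y i) = ν')
    {l : ℝ} (hl : 0 ≤ l) {N : ℕ} (hN : 0 < N) :
    (((N : ℝ)⁻¹ : ℝ) : EReal) *
        ENNReal.log (P {ω | (∑ i ∈ Finset.range N, X i ω) / (N : ℝ)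
          ≤ (∑ i ∈ Finset.range N, Y i ω) / (N : ℝ)}) ≤
      logMgf ν' l + logMgf ν (-l) := by
  by_cases h' : logMgf ν' l = ⊤
  · simp [h', EReal.top_add_of_ne_bot (logMgf_ne_bot _)]
  by_cases h : logMgf ν (-l) = ⊤
  · simp [h, EReal.add_top_of_ne_bot (logMgf_ne_bot _)]
  have hNpos : (0 : ℝ) < N := Nat.cast_pos.2 hN
  have hint' := integrable_exp_mul_of_logMgf_ne_top h'
  have hint := integrable_exp_mul_of_logMgf_ne_top h
  set r := log (mgf id ν' l) + log (mgf id ν (-l))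
  have hP : P {ω | (∑ i ∈ Finset.range N, X i ω) / (N : ℝ)
      ≤ (∑ i ∈ Finset.range N, Y i ω) / (N : ℝ)} ≤ ENNReal.ofReal (exp (N * r)) := by
    simp only [div_le_div_iff_of_pos_right hNpos]
    rw [← ofReal_measureReal, exp_nat_mul, exp_add, exp_log (mgf_pos (X := id) hint'),
      exp_log (mgf_pos (X := id) hint)]
    exact ENNReal.ofReal_le_ofReal
      (measureReal_sum_le_sum_le_mgf_pow hXm hYm hindep hX hY hl hint hint' N)
  calc (((N : ℝ)⁻¹ : ℝ) : EReal) * ENNReal.log (P _)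
      ≤ (((N : ℝ)⁻¹ : ℝ) : EReal) * ((N * r : ℝ) : EReal) := by
        refine mul_le_mul_of_nonneg_left ?_ (EReal.coe_nonneg.2 (inv_nonneg.2 hNpos.le))
        simpa [ENNReal.log_ofReal_of_pos (exp_pos _)] using ENNReal.log_monotone hP
    _ = logMgf ν' l + logMgf ν (-l) := by
        rw [← EReal.coe_mul, inv_mul_cancel_left₀ hNpos.ne', logMgf_eq_log_mgf h',
          logMgf_eq_log_mgf h, EReal.coe_add]

end Chernoff

/-- Let `ν, ν'` be probability measures on ℝ with finite first moments and means
`E(ν) > E(ν')`. Let `(X_i)` and `(Y_i)` be mutually independent i.i.d. sequences with laws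
`ν` and `ν'` respectively. Then
`limsup_N (1/N) ln P(X̄_N ≤ Ȳ_N) ≤ − inf_{x ∈ [E(ν'), E(ν)]} (φ*_{ν'}(x) + φ*_ν(x))`. -/
theorem limsup_log_prob_avg_le {Ω : Type*} [MeasurableSpace Ω]
    (P : Measure Ω) [IsProbabilityMeasure P]
    (ν ν' : Measure ℝ) [IsProbabilityMeasure ν] [IsProbabilityMeasure ν']
    (hint : Integrable (fun x => x) ν) (hint' : Integrable (fun x => x) ν')
    (hmean : Emean ν' < Emean ν)
    (X Y : ℕ → Ω → ℝ)
    (hXm : ∀ i, Measurable (X i)) (hYm : ∀ i, Measurable (Y i))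
    (hindep : iIndepFun (Sum.elim X Y) P)
    (hX : ∀ i, P.map (X i) = ν) (hY : ∀ i, P.map (Y i) = ν') :
    Filter.limsup (fun N : ℕ =>
        (((N : ℝ)⁻¹ : ℝ) : EReal) *
          ENNReal.log (P {ω | (∑ i ∈ Finset.range N, X i ω) / (N : ℝ)
                                ≤ (∑ i ∈ Finset.range N, Y i ω) / (N : ℝ)}))
        Filter.atTop
      ≤ - ⨅ x ∈ Set.Icc (Emean ν') (Emean ν), (phiStar ν' x + phiStar ν x) := by
  refine le_trans (le_iInf₂ fun l (hl : 0 ≤ l) => ?_)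
    (iInf_logMgf_add_le_neg_Phi hint hint' hmean.le)
  exact limsup_le_of_le (h := (eventually_gt_atTop 0).mono fun _ hN =>
    inv_mul_log_measure_avg_le_avg_le hXm hYm hindep hX hY hl hN)

end
end

section
/- Let D be any set of probability measures on ℝ with finite first moments and let ν ∈ D. Then φ*_ν(x) ≤ Linf≤(x,ν) for all x ≤ E(ν), and φ*_ν(x) ≤ Linf≥(x,ν) for all x ≥ E(ν). -/
/-
Fix `λ` and `ζ ∈ D` with `x` between `E(ζ)` and `E(ν)`; then `λx ≤ λE(ζ)` or `λx ≤ λE(ν)`.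
In the first case the Donsker–Varadhan inequality gives `λE(ζ) − φ_ν(λ) ≤ KL(ζ, ν)`; in the
second, Jensen's inequality (Donsker–Varadhan with `ζ = ν`) gives `λE(ν) − φ_ν(λ) ≤ 0`.
-/

open MeasureTheory Filter Set ProbabilityTheory
open scoped ENNReal NNReal

noncomputable section

open Real InformationTheory

lemma KL_eq_klDiv (ζ ν : Measure ℝ) [IsProbabilityMeasure ζ] [IsProbabilityMeasure ν] :
    KL ζ ν = klDiv ζ ν := by
  simp only [KL, klDiv_def, probReal_univ, add_sub_cancel_right]
  rfl

/-- Donsker–Varadhan inequality: Gibbs' inequality for `μ` against the tilted measure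
`ν.tilted f`. -/
lemma ofReal_integral_sub_log_integral_exp_le_klDiv {α : Type*} [MeasurableSpace α]
    {μ ν : Measure α} [IsProbabilityMeasure μ] [IsProbabilityMeasure ν] {f : α → ℝ}
    (hfμ : Integrable f μ) (hfν : Integrable (fun x ↦ exp (f x)) ν) :
    ENNReal.ofReal (∫ x, f x ∂μ - log (∫ x, exp (f x) ∂ν)) ≤ klDiv μ ν := by
  by_cases h : μ ≪ ν ∧ Integrable (llr μ ν) μ
  · obtain ⟨hμν, h_int⟩ := h
    have : IsProbabilityMeasure (ν.tilted f) := isProbabilityMeasure_tilted hfν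
    have h_gibbs := integral_llr_add_sub_measure_univ_nonneg
      (hμν.trans (absolutelyContinuous_tilted hfν)) (integrable_llr_tilted_right hμν hfμ h_int hfν)
    rw [integral_llr_tilted_right hμν hfμ hfν h_int] at h_gibbs
    rw [klDiv_of_ac_of_integrable hμν h_int]
    refine ENNReal.ofReal_le_ofReal ?_
    simp only [probReal_univ] at h_gibbs ⊢
    linarith
  · rw [klDiv_eq_top_iff.2 fun hμν h_int ↦ h ⟨hμν, h_int⟩]
    exact le_top

lemma mul_integral_le_log_integral_exp {α : Type*} [MeasurableSpace α] {ν : Measure α}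
    [IsProbabilityMeasure ν] {X : α → ℝ} (hX : Integrable X ν) {l : ℝ}
    (hl : Integrable (fun x ↦ exp (l * X x)) ν) :
    l * ∫ x, X x ∂ν ≤ log (∫ x, exp (l * X x) ∂ν) := by
  have h := ofReal_integral_sub_log_integral_exp_le_klDiv (hX.const_mul l) hl
  rw [klDiv_self, nonpos_iff_eq_zero, ENNReal.ofReal_eq_zero, integral_const_mul] at h
  linarith

lemma logMgf_eq_log_integral (ν : Measure ℝ) [NeZero ν] {l : ℝ}
    (hl : Integrable (fun y ↦ exp (l * y)) ν) :
    logMgf ν l = log (∫ y, exp (l * y) ∂ν) := by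
  rw [logMgf, ← ofReal_integral_eq_lintegral_ofReal hl (ae_of_all _ fun y ↦ (exp_pos _).le),
    ENNReal.log_ofReal_of_pos (integral_exp_pos hl)]

lemma logMgf_eq_top_of_not_integrable (ν : Measure ℝ) {l : ℝ}
    (hl : ¬ Integrable (fun y ↦ exp (l * y)) ν) :
    logMgf ν l = ⊤ := by
  rw [logMgf, ← ENNReal.log_top]
  congr 1
  by_contra h
  refine hl ⟨by fun_prop, ?_⟩
  rwa [hasFiniteIntegral_iff_ofReal (ae_of_all _ fun y ↦ (exp_pos _).le), lt_top_iff_ne_top]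

lemma le_coe_ennreal_biInf {ι : Type*} {s : Set ι} {f : ι → ℝ≥0∞} {a : EReal}
    (h : ∀ i ∈ s, a ≤ f i) : a ≤ ((⨅ i ∈ s, f i : ℝ≥0∞) : EReal) := by
  refine (EReal.coe_toENNReal_eq_max ▸ le_max_right 0 a).trans ?_
  exact EReal.coe_ennreal_le_coe_ennreal_iff.2 <|
    le_iInf₂ fun i hi ↦ (EReal.toENNReal_le_toENNReal (h i hi)).trans_eq EReal.toENNReal_coe

lemma ofReal_mul_sub_log_integral_exp_le_klDiv {ζ ν : Measure ℝ} [IsProbabilityMeasure ζ]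
    [IsProbabilityMeasure ν] (hζ : Integrable (fun y ↦ y) ζ) (hν : Integrable (fun y ↦ y) ν)
    {x l : ℝ} (hx : x ∈ uIcc (Emean ζ) (Emean ν)) (hl : Integrable (fun y ↦ exp (l * y)) ν) :
    ENNReal.ofReal (l * x - log (∫ y, exp (l * y) ∂ν)) ≤ klDiv ζ ν := by
  have hlx : l * x ≤ max (l * Emean ζ) (l * Emean ν) :=
    (image_const_mul_uIcc l _ _ ▸ mem_image_of_mem (l * ·) hx).2
  rcases le_max_iff.1 hlx with hζx | hνx
  · refine (ENNReal.ofReal_le_ofReal ?_).trans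
      (ofReal_integral_sub_log_integral_exp_le_klDiv (hζ.const_mul l) hl)
    rw [integral_const_mul]
    exact sub_le_sub_right hζx _
  · have h_jensen : l * Emean ν ≤ log (∫ y, exp (l * y) ∂ν) :=
      mul_integral_le_log_integral_exp hν hl
    rw [ENNReal.ofReal_of_nonpos (by linarith)]
    exact zero_le

lemma phiStar_le_KL {ζ ν : Measure ℝ} [IsProbabilityMeasure ζ] [IsProbabilityMeasure ν]
    (hζ : Integrable (fun y ↦ y) ζ) (hν : Integrable (fun y ↦ y) ν) {x : ℝ}
    (hx : x ∈ uIcc (Emean ζ) (Emean ν)) : phiStar ν x ≤ KL ζ ν := by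
  refine iSup_le fun l ↦ ?_
  by_cases hl : Integrable (fun y ↦ exp (l * y)) ν
  · rw [logMgf_eq_log_integral ν hl, ← EReal.coe_sub, KL_eq_klDiv]
    calc ((l * x - log (∫ y, exp (l * y) ∂ν) : ℝ) : EReal)
        ≤ ENNReal.ofReal (l * x - log (∫ y, exp (l * y) ∂ν)) := by
          rw [EReal.coe_ennreal_ofReal]
          exact_mod_cast le_max_left _ _
      _ ≤ klDiv ζ ν := by
          exact_mod_cast ofReal_mul_sub_log_integral_exp_le_klDiv hζ hν hx hl
  · rw [logMgf_eq_top_of_not_integrable ν hl, EReal.sub_top]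
    exact bot_le

/-- For any model `D` of probability measures on ℝ with finite first moments and any `ν ∈ D`:
`φ*_ν(x) ≤ Linf≤(x,ν)` for all `x ≤ E(ν)`, and `φ*_ν(x) ≤ Linf≥(x,ν)` for all `x ≥ E(ν)`. -/
theorem phiStar_le_Linf (D : Set (Measure ℝ))
    (hD : ∀ ζ ∈ D, IsProbabilityMeasure ζ ∧ Integrable (fun x => x) ζ)
    (ν : Measure ℝ) (hν : ν ∈ D) :
    (∀ x : ℝ, x ≤ Emean ν → phiStar ν x ≤ (Linfle D x ν : EReal)) ∧
    (∀ x : ℝ, Emean ν ≤ x → phiStar ν x ≤ (Linfge D x ν : EReal)) := by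
  obtain ⟨_, hν_int⟩ := hD ν hν
  refine ⟨fun x hxν ↦ le_coe_ennreal_biInf ?_, fun x hνx ↦ le_coe_ennreal_biInf ?_⟩
  · rintro ζ ⟨hζD, hζx⟩
    obtain ⟨_, hζ_int⟩ := hD ζ hζD
    exact phiStar_le_KL hζ_int hν_int (Icc_subset_uIcc ⟨hζx, hxν⟩)
  · rintro ζ ⟨hζD, hxζ⟩
    obtain ⟨_, hζ_int⟩ := hD ζ hζD
    exact phiStar_le_KL hζ_int hν_int (Icc_subset_uIcc' ⟨hνx, hxζ⟩)

end
end

section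
/- Consider the model D = P[0,1] and let ν ∈ P[0,1] with m(ν) the minimum of its closed support. Then Linf≤(m(ν),ν) = ln(1/ν({m(ν)})) (equal to +∞ when ν({m(ν)}) = 0), while Linf<(m(ν),ν) = +∞. -/
/-! Since `ν` puts no mass below `m = m(ν)`, every `ζ ≪ ν` lives on `[m, 1]`, so `E(ζ) ≥ m`, with
equality only for `ζ = δ_m`. Hence `Linf<(m, ν)` is an infimum of `+∞`'s, and `Linf≤(m, ν)` is
`KL(δ_m, ν)`: this is `+∞` when `ν{m} = 0` (then `δ_m` is not `≪ ν`), and otherwise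
`ln (1/ν{m})`, because `dδ_m/dν` takes the value `1/ν{m}` at the atom `m`. -/

open MeasureTheory Filter Set ProbabilityTheory
open scoped ENNReal NNReal

noncomputable section

lemma KL_eq_top_of_not_absolutelyContinuous {ζ ν : Measure ℝ} (h : ¬ ζ ≪ ν) : KL ζ ν = ⊤ := by
  rw [KL, if_neg (fun h' => h h'.1)]

lemma msupport_eq_support (ν : Measure ℝ) : msupport ν = ν.support := by
  ext x
  simp [msupport, Measure.mem_support_iff_forall, pos_iff_ne_zero]

lemma ae_sInf_support_le {ν : Measure ℝ} (h : BddBelow ν.support) :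
    ∀ᵐ x ∂ν, sInf ν.support ≤ x :=
  mem_of_superset Measure.support_mem_ae fun _ hx => csInf_le h hx

lemma MeasureTheory.Measure.eq_dirac_of_ae_eq {α : Type*} [MeasurableSpace α]
    [MeasurableSingletonClass α] {ζ : Measure α} [IsProbabilityMeasure ζ] {a : α}
    (h : ∀ᵐ x ∂ζ, x = a) : ζ = Measure.dirac a := by
  have hζ : ζ = ζ {a} • Measure.dirac a := by
    simpa using Measure.ae_mem_finset_iff (μ := ζ) (s := {a}) |>.1 (by simpa using h)
  have h1 : ζ {a} = 1 := by simpa using (congrArg (· univ) hζ).symm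
  rwa [h1, one_smul] at hζ

section Mean

variable {ζ : Measure ℝ} [IsProbabilityMeasure ζ] {m : ℝ}

lemma le_integral_id_of_ae_le (hint : Integrable (fun x => x) ζ) (h : ∀ᵐ x ∂ζ, m ≤ x) :
    m ≤ ∫ x, x ∂ζ := by
  simpa using integral_mono_ae (integrable_const m) hint h

lemma ae_eq_of_ae_le_of_integral_le (hint : Integrable (fun x => x) ζ) (h : ∀ᵐ x ∂ζ, m ≤ x)
    (hle : ∫ x, x ∂ζ ≤ m) : ∀ᵐ x ∂ζ, x = m := by
  have hnn : 0 ≤ᵐ[ζ] fun x => x - m := h.mono fun x hx => sub_nonneg.2 hx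
  have hzero : ∫ x, (x - m) ∂ζ = 0 := by
    refine le_antisymm ?_ (integral_nonneg_of_ae hnn)
    rw [integral_sub hint (integrable_const m)]
    simpa using hle
  filter_upwards [(integral_eq_zero_iff_of_nonneg_ae hnn (hint.sub (integrable_const m))).1 hzero]
    with x hx
  exact sub_eq_zero.1 hx

end Mean

section Dirac

variable {ν : Measure ℝ} {m : ℝ}

lemma dirac_absolutelyContinuous_iff : Measure.dirac m ≪ ν ↔ ν {m} ≠ 0 := by
  refine ⟨fun h h0 => by simpa using h h0, fun hm s hs => ?_⟩
  have hms : m ∉ s := fun h => hm (measure_mono_null (singleton_subset_iff.2 h) hs)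
  simp [hms]

lemma rnDeriv_dirac_apply_self [SigmaFinite ν] (hm : ν {m} ≠ 0) :
    (Measure.dirac m).rnDeriv ν m = (ν {m})⁻¹ := by
  refine ENNReal.eq_inv_of_mul_eq_one_left ?_
  have := Measure.setLIntegral_rnDeriv (dirac_absolutelyContinuous_iff.2 hm) {m}
  simpa [lintegral_singleton, mul_comm] using this

lemma KL_dirac [IsProbabilityMeasure ν] :
    (KL (Measure.dirac m) ν : EReal) = - ENNReal.log (ν {m}) := by
  by_cases hm : ν {m} = 0
  · rw [KL_eq_top_of_not_absolutelyContinuous (by rwa [dirac_absolutelyContinuous_iff, not_not]),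
      hm]
    simp
  have hint : Integrable (fun x => Real.log (((Measure.dirac m).rnDeriv ν x).toReal))
      (Measure.dirac m) :=
    integrable_dirac (by simp)
  rw [KL, if_pos ⟨dirac_absolutelyContinuous_iff.2 hm, hint⟩, integral_dirac,
    rnDeriv_dirac_apply_self hm, ← ENNReal.log_inv]
  have hinv_ne_top : (ν {m})⁻¹ ≠ ⊤ := ENNReal.inv_ne_top.2 hm
  have hone_le : 1 ≤ (ν {m})⁻¹ := ENNReal.one_le_inv.2 prob_le_one
  rw [ENNReal.log_pos_real (by simp) hinv_ne_top, EReal.coe_ennreal_ofReal,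
    max_eq_left (Real.log_nonneg ?_)]
  simpa using ENNReal.toReal_mono hinv_ne_top hone_le

end Dirac

section UnitInterval

variable {ζ ν : Measure ℝ}

lemma ae_mem_Icc_of_mem_Pcc (hζ : ζ ∈ Pcc) : ∀ᵐ x ∂ζ, x ∈ Icc (0 : ℝ) 1 :=
  mem_ae_iff.2 hζ.2

lemma integrable_id_of_mem_Pcc (hζ : ζ ∈ Pcc) : Integrable (fun x => x) ζ := by
  have := hζ.1
  refine Integrable.of_bound aestronglyMeasurable_id 1 ?_
  filter_upwards [ae_mem_Icc_of_mem_Pcc hζ] with x hx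
  rw [Real.norm_eq_abs, abs_le]
  constructor <;> linarith [hx.1, hx.2]

lemma dirac_mem_Pcc {m : ℝ} (hm : m ∈ Icc (0 : ℝ) 1) : Measure.dirac m ∈ Pcc :=
  ⟨inferInstance, by simp [hm]⟩

lemma support_subset_Icc_of_mem_Pcc (hν : ν ∈ Pcc) : ν.support ⊆ Icc (0 : ℝ) 1 :=
  Measure.support_subset_of_isClosed isClosed_Icc (ae_mem_Icc_of_mem_Pcc hν)

lemma bddBelow_support_of_mem_Pcc (hν : ν ∈ Pcc) : BddBelow ν.support :=
  bddBelow_Icc.mono (support_subset_Icc_of_mem_Pcc hν)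

lemma mMin_mem_Icc (hν : ν ∈ Pcc) : mMin ν ∈ Icc (0 : ℝ) 1 := by
  have := hν.1
  rw [mMin, msupport_eq_support]
  exact support_subset_Icc_of_mem_Pcc hν <| Measure.isClosed_support.csInf_mem
    (Measure.nonempty_support (IsProbabilityMeasure.ne_zero ν)) (bddBelow_support_of_mem_Pcc hν)

lemma ae_mMin_le_of_absolutelyContinuous (hν : ν ∈ Pcc) (hac : ζ ≪ ν) :
    ∀ᵐ x ∂ζ, mMin ν ≤ x := by
  rw [mMin, msupport_eq_support]
  exact hac.ae_le (ae_sInf_support_le (bddBelow_support_of_mem_Pcc hν))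

lemma mMin_le_Emean (hζ : ζ ∈ Pcc) (hν : ν ∈ Pcc) (hac : ζ ≪ ν) : mMin ν ≤ Emean ζ :=
  have := hζ.1
  le_integral_id_of_ae_le (integrable_id_of_mem_Pcc hζ)
    (ae_mMin_le_of_absolutelyContinuous hν hac)

lemma eq_dirac_of_Emean_le_mMin (hζ : ζ ∈ Pcc) (hν : ν ∈ Pcc) (hac : ζ ≪ ν)
    (hle : Emean ζ ≤ mMin ν) : ζ = Measure.dirac (mMin ν) :=
  have := hζ.1
  Measure.eq_dirac_of_ae_eq <| ae_eq_of_ae_le_of_integral_le (integrable_id_of_mem_Pcc hζ)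
    (ae_mMin_le_of_absolutelyContinuous hν hac) hle

lemma Linfle_Pcc_mMin (hν : ν ∈ Pcc) :
    Linfle Pcc (mMin ν) ν = KL (Measure.dirac (mMin ν)) ν := by
  refine le_antisymm (iInf₂_le _ ⟨dirac_mem_Pcc (mMin_mem_Icc hν), by simp [Emean]⟩) ?_
  refine le_iInf₂ fun ζ ⟨hζ, hle⟩ => ?_
  by_cases hac : ζ ≪ ν
  · rw [eq_dirac_of_Emean_le_mMin hζ hν hac hle]
  · simp [KL_eq_top_of_not_absolutelyContinuous hac]

lemma Linflt_Pcc_mMin (hν : ν ∈ Pcc) : Linflt Pcc (mMin ν) ν = ⊤ :=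
  iInf₂_eq_top.2 fun _ ⟨hζ, hlt⟩ => KL_eq_top_of_not_absolutelyContinuous
    fun hac => (mMin_le_Emean hζ hν hac).not_gt hlt

end UnitInterval

/-- For the model `P[0,1]` and `ν ∈ P[0,1]` with `m(ν)` the minimum of its closed support:
`Linf≤(m(ν),ν) = ln(1/ν({m(ν)})) = − ln ν({m(ν)})` (equal to `+∞` when `ν({m(ν)}) = 0`),
while `Linf<(m(ν),ν) = +∞`. -/
theorem Linf_at_mMin (ν : Measure ℝ) (hν : ν ∈ Pcc) :
    (Linfle Pcc (mMin ν) ν : EReal) = - ENNReal.log (ν {mMin ν}) ∧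
    Linflt Pcc (mMin ν) ν = ⊤ := by
  have := hν.1
  exact ⟨by rw [Linfle_Pcc_mMin hν, KL_dirac], Linflt_Pcc_mMin hν⟩

end
end

section
/- Let ν be a Borel probability measure on [0,1] and m(ν) the minimum of its closed support. Then φ*_ν(m(ν)) = − ln ν({m(ν)}), i.e., sup_{λ∈ℝ} ( λ·m(ν) − φ_ν(λ) ) = − ln ν({m(ν)}), with the convention that the right-hand side equals +∞ when ν({m(ν)}) = 0. -/
open MeasureTheory Filter Set ProbabilityTheory
open scoped ENNReal NNReal

noncomputable section

/-! Writing `m = m(ν)`, recentring gives `φ*_ν(m) = -ln inf_λ ∫ e^{λ(x-m)} dν(x)`. As `ν` lives on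
`[m, ∞)`, every integrand dominates the indicator of `{m}` and tends to it as `λ → -∞`, boundedly
by `1`; dominated convergence identifies the infimum with `ν {m}`. -/

open Topology

lemma msupport_subset_of_measure_compl_eq_zero {ν : Measure ℝ} {s : Set ℝ} (hs : IsClosed s)
    (hν : ν sᶜ = 0) : msupport ν ⊆ s := fun x hx => by
  by_contra hxs
  exact hx sᶜ (hs.isOpen_compl.mem_nhds hxs) hν

lemma measure_Iio_mMin_eq_zero {ν : Measure ℝ} (hbdd : BddBelow (msupport ν)) :
    ν (Iio (mMin ν)) = 0 := by
  refine measure_null_of_locally_null _ fun x hx => ?_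
  have hxs : x ∉ msupport ν := fun h => not_le.mpr hx (csInf_le hbdd h)
  simp only [msupport, mem_ofPred_eq, not_forall, not_not] at hxs
  obtain ⟨U, hU, hU0⟩ := hxs
  exact ⟨U, mem_nhdsWithin_of_mem_nhds hU, hU0⟩

lemma ae_mMin_le {ν : Measure ℝ} (hbdd : BddBelow (msupport ν)) : ∀ᵐ x ∂ν, mMin ν ≤ x := by
  simpa only [ae_iff, not_le, ← Iio_def] using measure_Iio_mMin_eq_zero hbdd

def centeredMgf (ν : Measure ℝ) (c l : ℝ) : ℝ≥0∞ :=
  ∫⁻ x, ENNReal.ofReal (Real.exp (l * (x - c))) ∂ν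

lemma logMgf_eq_add_log_centeredMgf (ν : Measure ℝ) (c l : ℝ) :
    logMgf ν l = ((l * c : ℝ) : EReal) + ENNReal.log (centeredMgf ν c l) := by
  have hsplit : ∀ x, ENNReal.ofReal (Real.exp (l * x)) =
      ENNReal.ofReal (Real.exp (l * c)) * ENNReal.ofReal (Real.exp (l * (x - c))) := by
    intro x
    rw [← ENNReal.ofReal_mul (Real.exp_pos _).le, ← Real.exp_add]
    ring_nf
  rw [logMgf, lintegral_congr hsplit, lintegral_const_mul _ (by fun_prop), ENNReal.log_mul_add,
    ENNReal.log_ofReal_of_pos (Real.exp_pos _), Real.log_exp, centeredMgf]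

lemma phiStar_eq_neg_log_iInf_centeredMgf (ν : Measure ℝ) (c : ℝ) :
    phiStar ν c = -ENNReal.log (⨅ l, centeredMgf ν c l) := by
  simp only [phiStar, logMgf_eq_add_log_centeredMgf ν c, EReal.sub_add_cancel_left]
  rw [← ENNReal.logOrderIso_apply, ENNReal.logOrderIso.map_iInf]
  exact (EReal.negOrderIso.map_iInf _).symm

lemma measure_singleton_le_centeredMgf (ν : Measure ℝ) (c l : ℝ) : ν {c} ≤ centeredMgf ν c l :=
  calc ν {c} = ∫⁻ x in {c}, ENNReal.ofReal (Real.exp (l * (x - c))) ∂ν := by simp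
    _ ≤ centeredMgf ν c l := setLIntegral_le_lintegral _ _

lemma tendsto_centeredMgf_atBot {ν : Measure ℝ} [IsFiniteMeasure ν] {c : ℝ}
    (h : ∀ᵐ x ∂ν, c ≤ x) : Tendsto (centeredMgf ν c) atBot (𝓝 (ν {c})) := by
  have hlim : ∀ᵐ x ∂ν, Tendsto (fun l => ENNReal.ofReal (Real.exp (l * (x - c)))) atBot
      (𝓝 (({c} : Set ℝ).indicator 1 x)) := by
    filter_upwards [h] with x hx
    rcases hx.eq_or_lt with rfl | hlt
    · simp
    · rw [indicator_of_notMem (notMem_singleton_iff.2 hlt.ne')]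
      have hlin : Tendsto (fun l => l * (x - c)) atBot atBot :=
        tendsto_id.atBot_mul_const (sub_pos.2 hlt)
      simpa using ENNReal.tendsto_ofReal (Real.tendsto_exp_atBot.comp hlin)
  have hbound : ∀ᶠ l in atBot, ∀ᵐ x ∂ν, ENNReal.ofReal (Real.exp (l * (x - c))) ≤ 1 := by
    filter_upwards [eventually_le_atBot 0] with l hl
    filter_upwards [h] with x hx
    rw [ENNReal.ofReal_le_one, Real.exp_le_one_iff]
    exact mul_nonpos_of_nonpos_of_nonneg hl (sub_nonneg.2 hx)
  have hdom := tendsto_lintegral_filter_of_dominated_convergence _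
    (Eventually.of_forall fun l => by fun_prop) hbound (by simp) hlim
  rwa [lintegral_indicator_one (measurableSet_singleton c)] at hdom

lemma iInf_centeredMgf {ν : Measure ℝ} [IsFiniteMeasure ν] {c : ℝ} (h : ∀ᵐ x ∂ν, c ≤ x) :
    ⨅ l, centeredMgf ν c l = ν {c} :=
  le_antisymm (ge_of_tendsto' (tendsto_centeredMgf_atBot h) fun l => iInf_le _ l)
    (le_iInf (measure_singleton_le_centeredMgf ν c))

/-- For a Borel probability measure `ν` on `[0,1]` with `m(ν)` the minimum of its closed
support: `φ*_ν(m(ν)) = sup_λ (λ·m(ν) − φ_ν(λ)) = − ln ν({m(ν)})`, with the convention that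
the right-hand side equals `+∞` when `ν({m(ν)}) = 0`. -/
theorem phiStar_at_mMin (ν : Measure ℝ) (hν : ν ∈ Pcc) :
    phiStar ν (mMin ν) = - ENNReal.log (ν {mMin ν}) := by
  obtain ⟨hprob, hcc⟩ := hν
  have hbdd : BddBelow (msupport ν) :=
    ⟨0, fun x hx => (msupport_subset_of_measure_compl_eq_zero isClosed_Icc hcc hx).1⟩
  rw [phiStar_eq_neg_log_iInf_centeredMgf, iInf_centeredMgf (ae_mMin_le hbdd)]

end
end

section
/- Let ρ be a nonzero σ-finite measure on ℝ not concentrated on a single point, such that the natural parameter set Θ = {θ ∈ ℝ : ∫ e^{θy} dρ(y) < ∞} is a nonempty open interval. For θ ∈ Θ set b(θ) = ln ∫ e^{θy} dρ(y), and let ν_θ be the probability measure with density y ↦ e^{θy − b(θ)} with respect to ρ. Then b is differentiable on Θ with b'(θ) = E(ν_θ), and for all θ1, θ2 ∈ Θ: φ*_{ν_{θ1}}(b'(θ2)) = KL(ν_{θ2}, ν_{θ1}) = (θ2 − θ1)·b'(θ2) − ( b(θ2) − b(θ1) ). -/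
open MeasureTheory Filter Set ProbabilityTheory
open scoped ENNReal NNReal

noncomputable section

/-! `ν θ` is the exponential tilt `ρ.tilted (θ * ·)` and `b` is the cumulant generating function
of `ρ`, whose derivative is the mean of the tilted measure. Tilts compose, so `ν θ2` is the tilt
of `ν θ1` by `θ2 - θ1`; its log-likelihood ratio against `ν θ1` is the affine function
`(θ2 - θ1) x - (b θ2 - b θ1)`, whose `ν θ2`-mean is the KL divergence. The log-mgf of `ν θ1` at
`l` is `b (θ1 + l) - b θ1` (or `+∞`), and Jensen's inequality for `ν θ2` shows that the
supremum defining `φ*` is attained at `l = θ2 - θ1`. -/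

open Real

section Tilted

variable {Ω : Type*} {mΩ : MeasurableSpace Ω} {μ : Measure Ω} {X : Ω → ℝ} {s t : ℝ}

lemma withDensity_exp_sub_cgf [NeZero μ] (ht : Integrable (fun ω => exp (t * X ω)) μ) :
    μ.withDensity (fun ω => ENNReal.ofReal (exp (t * X ω - cgf X μ t)))
      = μ.tilted (t * X ·) := by
  simp_rw [Measure.tilted, exp_sub, exp_cgf ht, mgf]

lemma integrable_exp_mul_tilted_iff (ht : Integrable (fun ω => exp (t * X ω)) μ) :
    Integrable (fun ω => exp (s * X ω)) (μ.tilted (t * X ·)) ↔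
      Integrable (fun ω => exp ((t + s) * X ω)) μ := by
  simp_rw [integrable_tilted_iff ht, smul_eq_mul, ← exp_add, add_mul]

lemma tilted_mul_tilted_mul (ht : Integrable (fun ω => exp (t * X ω)) μ) :
    (μ.tilted (t * X ·)).tilted (s * X ·) = μ.tilted ((t + s) * X ·) := by
  rw [tilted_tilted ht]
  congr 1
  ext ω
  simp only [Pi.add_apply, add_mul]

lemma cgf_tilted_mul [NeZero μ] (ht : Integrable (fun ω => exp (t * X ω)) μ)
    (hts : Integrable (fun ω => exp ((t + s) * X ω)) μ) :
    cgf X (μ.tilted (t * X ·)) s = cgf X μ (t + s) - cgf X μ t := by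
  rw [cgf, mgf, integral_exp_tilted, cgf, cgf, ← log_div (mgf_pos' (NeZero.ne μ) hts).ne'
    (mgf_pos' (NeZero.ne μ) ht).ne']
  simp only [mgf, Pi.add_apply, add_mul]

lemma mul_integral_le_cgf [IsProbabilityMeasure μ] (hX : Integrable X μ)
    (ht : Integrable (fun ω => exp (t * X ω)) μ) : t * μ[X] ≤ cgf X μ t := by
  rw [cgf, le_log_iff_exp_le (mgf_pos ht), ← integral_const_mul]
  exact convexOn_exp.map_integral_le continuous_exp.continuousOn isClosed_univ
    (ae_of_all _ fun _ => mem_univ _) (hX.const_mul t) ht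

lemma cgf_le_mul_integral_tilted [IsProbabilityMeasure μ]
    (ht : Integrable (fun ω => exp (t * X ω)) μ) (hX : Integrable X (μ.tilted (t * X ·))) :
    cgf X μ t ≤ t * (μ.tilted (t * X ·))[X] := by
  have : IsProbabilityMeasure (μ.tilted (t * X ·)) := isProbabilityMeasure_tilted ht
  have h0 : Integrable (fun ω => exp ((t + -t) * X ω)) μ := by simp
  have jensen := mul_integral_le_cgf hX ((integrable_exp_mul_tilted_iff ht).2 h0)
  rw [cgf_tilted_mul ht h0, add_neg_cancel, cgf_zero] at jensen
  linarith

lemma integrable_tilted_mul_self (ht : t ∈ interior (integrableExpSet X μ)) :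
    Integrable X (μ.tilted (t * X ·)) :=
  memLp_one_iff_integrable.1 (by exact_mod_cast memLp_tilted_mul ht 1)

lemma hasDerivAt_cgf (ht : t ∈ interior (integrableExpSet X μ)) :
    HasDerivAt (cgf X μ) (μ.tilted (t * X ·))[X] t :=
  integral_tilted_mul_self ht ▸ (analyticAt_cgf ht).differentiableAt.hasDerivAt

end Tilted

section LogMgf

variable {μ : Measure ℝ} {l t : ℝ}

lemma logMgf_eq_cgf [NeZero μ] (hl : Integrable (fun x => exp (l * x)) μ) :
    logMgf μ l = cgf id μ l := by
  rw [logMgf, ← ofReal_integral_eq_lintegral_ofReal hl (ae_of_all _ fun _ => (exp_pos _).le)]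
  exact ENNReal.log_ofReal_of_pos (mgf_pos' (X := id) (NeZero.ne μ) hl)

lemma logMgf_eq_top (hl : ¬ Integrable (fun x => exp (l * x)) μ) : logMgf μ l = ⊤ := by
  rw [logMgf, ENNReal.log_eq_top_iff]
  by_contra h
  exact hl ⟨by fun_prop, (hasFiniteIntegral_iff_ofReal
    (ae_of_all _ fun _ => (exp_pos _).le)).2 (lt_top_iff_ne_top.2 h)⟩

lemma phiStar_mean_tilted [NeZero μ] (ht : Integrable (fun x => exp (t * x)) μ)
    (hx : Integrable id (μ.tilted (t * ·))) :
    phiStar μ (Emean (μ.tilted (t * ·)))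
      = ((t * Emean (μ.tilted (t * ·)) - cgf id μ t : ℝ) : EReal) := by
  have : IsProbabilityMeasure (μ.tilted (t * ·)) := isProbabilityMeasure_tilted ht
  refine le_antisymm (iSup_le fun l => ?_) (le_iSup_of_le t ?_)
  · by_cases hl : Integrable (fun x => exp (l * x)) μ
    · rw [logMgf_eq_cgf hl, ← EReal.coe_sub, EReal.coe_le_coe_iff]
      have hl' : Integrable (fun x => exp ((t + (l - t)) * x)) μ := by rwa [add_sub_cancel]
      have jensen : (l - t) * Emean (μ.tilted (t * ·)) ≤ cgf id (μ.tilted (t * ·)) (l - t) :=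
        mul_integral_le_cgf hx ((integrable_exp_mul_tilted_iff ht).2 hl')
      have hcgf : cgf id (μ.tilted (t * ·)) (l - t) = cgf id μ (t + (l - t)) - cgf id μ t :=
        cgf_tilted_mul ht hl'
      rw [hcgf, add_sub_cancel] at jensen
      linarith
    · rw [logMgf_eq_top hl, EReal.sub_top]
      exact bot_le
  · rw [logMgf_eq_cgf ht, ← EReal.coe_sub]

end LogMgf

lemma KL_tilted_left_self {μ : Measure ℝ} [SigmaFinite μ] [NeZero μ] {f : ℝ → ℝ}
    (hf : Integrable (fun x => exp (f x)) μ) (hfi : Integrable f (μ.tilted f)) :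
    KL (μ.tilted f) μ
      = ENNReal.ofReal (∫ x, f x ∂μ.tilted f - log (∫ x, exp (f x) ∂μ)) := by
  have : IsProbabilityMeasure (μ.tilted f) := isProbabilityMeasure_tilted hf
  have hlog : (fun x => log ((μ.tilted f).rnDeriv μ x).toReal)
      =ᵐ[μ.tilted f] fun x => f x - log (∫ x, exp (f x) ∂μ) :=
    (tilted_absolutelyContinuous μ f).ae_le (log_rnDeriv_tilted_left_self hf)
  rw [KL, if_pos ⟨tilted_absolutelyContinuous μ f,
      (hfi.sub (integrable_const _)).congr hlog.symm⟩,
    integral_congr_ae hlog, integral_sub hfi (integrable_const _), integral_const, probReal_univ,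
    one_smul]

lemma phiStar_mean_tilted_eq_KL {μ : Measure ℝ} [IsProbabilityMeasure μ] {t : ℝ}
    (ht : Integrable (fun x => exp (t * x)) μ) (hx : Integrable id (μ.tilted (t * ·))) :
    phiStar μ (Emean (μ.tilted (t * ·))) = KL (μ.tilted (t * ·)) μ ∧
      (KL (μ.tilted (t * ·)) μ : EReal)
        = ((t * Emean (μ.tilted (t * ·)) - cgf id μ t : ℝ) : EReal) := by
  have hKL : (KL (μ.tilted (t * ·)) μ : EReal)
      = ((t * Emean (μ.tilted (t * ·)) - cgf id μ t : ℝ) : EReal) := by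
    have hV : cgf id μ t ≤ t * Emean (μ.tilted (t * ·)) := cgf_le_mul_integral_tilted ht hx
    rw [KL_tilted_left_self ht (hx.const_mul t), integral_const_mul, EReal.coe_ennreal_ofReal]
    exact congrArg _ (max_eq_left (sub_nonneg.2 hV))
  exact ⟨(phiStar_mean_tilted ht hx).trans hKL.symm, hKL⟩

theorem exponential_family_b_deriv_and_KL_general
    (ρ : Measure ℝ) (hρ : ρ ≠ 0)
    (Θ : Set ℝ) (hΘ : Θ = {θ : ℝ | Integrable (fun y => Real.exp (θ * y)) ρ})
    (hopen : IsOpen Θ)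
    (b : ℝ → ℝ) (hb : ∀ θ, b θ = Real.log (∫ y, Real.exp (θ * y) ∂ρ))
    (ν : ℝ → Measure ℝ)
    (hν : ∀ θ, ν θ = ρ.withDensity (fun y => ENNReal.ofReal (Real.exp (θ * y - b θ)))) :
    (∀ θ ∈ Θ, HasDerivAt b (Emean (ν θ)) θ) ∧
    ∀ θ1 ∈ Θ, ∀ θ2 ∈ Θ,
      phiStar (ν θ1) (Emean (ν θ2)) = (KL (ν θ2) (ν θ1) : EReal) ∧
      (KL (ν θ2) (ν θ1) : EReal)
        = (((θ2 - θ1) * Emean (ν θ2) - (b θ2 - b θ1) : ℝ) : EReal) := by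
  have : NeZero ρ := ⟨hρ⟩
  subst hΘ
  obtain rfl : b = cgf id ρ := funext hb
  have hinterior : integrableExpSet id ρ = interior (integrableExpSet id ρ) :=
    hopen.interior_eq.symm
  have hν_tilted : ∀ θ ∈ integrableExpSet id ρ, ν θ = ρ.tilted (θ * ·) := fun θ hθ =>
    (hν θ).trans (withDensity_exp_sub_cgf hθ)
  refine ⟨fun θ hθ => hν_tilted θ hθ ▸ hasDerivAt_cgf (hinterior ▸ hθ),
    fun θ1 h1 θ2 h2 => ?_⟩
  have : IsProbabilityMeasure (ν θ1) := hν_tilted θ1 h1 ▸ isProbabilityMeasure_tilted h1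
  have h2' : Integrable (fun y => exp ((θ1 + (θ2 - θ1)) * y)) ρ := by rwa [add_sub_cancel]
  have h21 : ν θ2 = (ν θ1).tilted ((θ2 - θ1) * ·) := by
    rw [hν_tilted θ1 h1, hν_tilted θ2 h2]
    simpa using (tilted_mul_tilted_mul (X := id) (s := θ2 - θ1) h1).symm
  have hcgf : cgf id (ν θ1) (θ2 - θ1) = cgf id ρ θ2 - cgf id ρ θ1 := by
    rw [hν_tilted θ1 h1]
    simpa using cgf_tilted_mul (X := id) h1 h2'
  have hexp : Integrable (fun y => exp ((θ2 - θ1) * y)) (ν θ1) := by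
    rw [hν_tilted θ1 h1]
    exact (integrable_exp_mul_tilted_iff h1).2 h2'
  have hmean : Integrable id (ν θ2) :=
    hν_tilted θ2 h2 ▸ integrable_tilted_mul_self (hinterior ▸ h2)
  rw [h21] at hmean ⊢
  rw [← hcgf]
  exact phiStar_mean_tilted_eq_KL hexp hmean

/-- Canonical one-parameter exponential family. Let `ρ` be a nonzero σ-finite measure on ℝ,
not concentrated on a single point, whose natural parameter set
`Θ = {θ : ∫ e^{θy} dρ(y) < ∞}` is a nonempty open interval. With `b(θ) = ln ∫ e^{θy} dρ(y)`
and `ν_θ = e^{θ·y − b(θ)} dρ`, the function `b` is differentiable on `Θ` with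
`b'(θ) = E(ν_θ)`, and for all `θ1, θ2 ∈ Θ`:
`φ*_{ν_{θ1}}(b'(θ2)) = KL(ν_{θ2}, ν_{θ1}) = (θ2 − θ1)·b'(θ2) − (b(θ2) − b(θ1))`. -/
theorem exponential_family_b_deriv_and_KL
    (ρ : Measure ℝ) [SigmaFinite ρ] (hρ : ρ ≠ 0)
    (hnotpoint : ∀ x : ℝ, ρ {x}ᶜ ≠ 0)
    (Θ : Set ℝ) (hΘ : Θ = {θ : ℝ | Integrable (fun y => Real.exp (θ * y)) ρ})
    (hopen : IsOpen Θ) (hne : Θ.Nonempty) (hconn : Set.OrdConnected Θ)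
    (b : ℝ → ℝ) (hb : ∀ θ, b θ = Real.log (∫ y, Real.exp (θ * y) ∂ρ))
    (ν : ℝ → Measure ℝ)
    (hν : ∀ θ, ν θ = ρ.withDensity (fun y => ENNReal.ofReal (Real.exp (θ * y - b θ)))) :
    (∀ θ ∈ Θ, HasDerivAt b (Emean (ν θ)) θ) ∧
    ∀ θ1 ∈ Θ, ∀ θ2 ∈ Θ,
      phiStar (ν θ1) (Emean (ν θ2)) = (KL (ν θ2) (ν θ1) : EReal) ∧
      (KL (ν θ2) (ν θ1) : EReal)
        = (((θ2 - θ1) * Emean (ν θ2) - (b θ2 - b θ1) : ℝ) : EReal) :=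
  exponential_family_b_deriv_and_KL_general ρ hρ Θ hΘ hopen b hb ν hν

end
end

section
/- For every x ∈ [1/4, 1/2]: (1−x)·ln((1−x)/x) + x·ln(x/(1−x)) ≤ 9·(1/2 − x)². Equivalently, the Kullback–Leibler divergence between the Bernoulli distributions of parameters 1−x and x satisfies KL(Ber(1−x), Ber(x)) ≤ 9·(1/2 − x)² for x ∈ [1/4, 1/2]. -/
/-! Put `t = 1 - 2x ∈ [0, 1/2]`. The left-hand side equals `t · L(t)` with
`L(t) = log ((1 + t) / (1 - t)) = 2 ∑ t^(2k+1) / (2k+1)`. The series has nonnegative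
coefficients and only odd powers, so `L(t) / t` is nondecreasing and
`L(t) ≤ 2t · L(1/2) = 2t · log 3`. Hence the left-hand side is at most
`2 log 3 · t² ≤ (9/4) t² = 9 (1/2 - x)²`. -/

open Real

theorem mul_log_one_add_sub_log_one_sub_le {s r : ℝ} (hs : 0 ≤ s) (hsr : s ≤ r) (hr : r < 1) :
    r * (log (1 + s) - log (1 - s)) ≤ s * (log (1 + r) - log (1 - r)) := by
  have habs : ∀ {u : ℝ}, 0 ≤ u → u < 1 → |u| < 1 := fun hu hu1 => by rwa [abs_of_nonneg hu]
  refine hasSum_le (fun k => ?_)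
    ((hasSum_log_sub_log_of_abs_lt_one (habs hs (hsr.trans_lt hr))).mul_left r)
    ((hasSum_log_sub_log_of_abs_lt_one (habs (hs.trans hsr) hr)).mul_left s)
  have hpow : s ^ (2 * k) ≤ r ^ (2 * k) := pow_le_pow_left₀ hs hsr _
  have hcoef : 0 ≤ 2 * (1 / (2 * (k : ℝ) + 1)) * (r * s) :=
    mul_nonneg (by positivity) (mul_nonneg (hs.trans hsr) hs)
  calc r * (2 * (1 / (2 * k + 1)) * s ^ (2 * k + 1))
      = 2 * (1 / (2 * k + 1)) * (r * s) * s ^ (2 * k) := by ring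
    _ ≤ 2 * (1 / (2 * k + 1)) * (r * s) * r ^ (2 * k) :=
        mul_le_mul_of_nonneg_left hpow hcoef
    _ = s * (2 * (1 / (2 * k + 1)) * r ^ (2 * k + 1)) := by ring

theorem log_one_add_div_one_sub_le {t : ℝ} (ht : 0 ≤ t) (ht2 : t ≤ 1 / 2) :
    log ((1 + t) / (1 - t)) ≤ 2 * t * log 3 := by
  have h := mul_log_one_add_sub_log_one_sub_le ht ht2 (by norm_num)
  have hlog3 : log (1 + 1 / 2) - log (1 - 1 / 2) = log 3 := by
    rw [← log_div (by norm_num) (by norm_num)]; norm_num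
  rw [hlog3] at h
  rw [log_div (by linarith) (by linarith)]
  linarith

/-- For every `x ∈ [1/4, 1/2]`, the Kullback–Leibler divergence between the Bernoulli
distributions of parameters `1 − x` and `x`, namely
`(1−x)·ln((1−x)/x) + x·ln(x/(1−x))`, is at most `9·(1/2 − x)²`. -/
theorem bernoulli_kl_le_nine_gap_sq :
    ∀ x ∈ Set.Icc (1/4 : ℝ) (1/2 : ℝ),
      (1 - x) * Real.log ((1 - x) / x) + x * Real.log (x / (1 - x))
        ≤ 9 * (1/2 - x) ^ 2 := by
  rintro x ⟨hx_lo, hx_hi⟩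
  set t := 1 - 2 * x with ht
  have hratio : (1 - x) / x = (1 + t) / (1 - t) := by
    rw [ht]; field_simp; ring
  have hL := log_one_add_div_one_sub_le (t := t) (by linarith) (by linarith)
  have hlog3_lt : log 3 < 9 / 8 := log_three_lt_d9.trans (by norm_num)
  calc (1 - x) * log ((1 - x) / x) + x * log (x / (1 - x))
      = t * log ((1 + t) / (1 - t)) := by rw [← inv_div (1 - x) x, log_inv, hratio]; ring
    _ ≤ t * (2 * t * log 3) := mul_le_mul_of_nonneg_left hL (by linarith)
    _ ≤ 9 * (1 / 2 - x) ^ 2 := by nlinarith [sq_nonneg t]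
end
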